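/- arXiv:2204.10712 — 4 statements merged into one kernel-verified Lean document; each statement's English description precedes it below -/
import Mathlib

section
/- Let f : B^n → B^n be a Boolean network whose interaction graph is a directed acyclic graph (i.e., the relation 'j influences i', meaning f_i depends on coordinate j, has no directed cycle). Then f has a unique fixed point x*, and every trajectory under parallel iteration reaches x*: for every x ∈ B^n, f^n(x) = x*. -/
/-!
Order the nodes by their number of ancestors in the interaction graph; acyclicity makes this
strictly increase along every arc and stay below `n`. Since `f_i` only reads the coordinates of
the nodes influencing `i`, induction on `k` shows that the coordinate `i` of `f^[k] x` no longer
depends on `x` once `i` has fewer than `k` ancestors. Hence `f^[n]` is constant, and a map with a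
constant iterate has its value as unique fixed point.
-/

/-- `influ f j i` : node `j` influences node `i`, i.e. `f_i` depends on `x_j`. -/
def influ {n : ℕ} (f : (Fin n → Bool) → Fin n → Bool) (j i : Fin n) : Prop :=
  ∃ x : Fin n → Bool,
    f (Function.update x j true) i ≠ f (Function.update x j false) i

open Function Relation Finset

theorem Function.fixedPoint_of_iterate_eq_const {α : Type*} {f : α → α} {n : ℕ} {c : α}
    (h : ∀ x, f^[n] x = c) : f c = c ∧ ∀ y, f y = y → y = c := by
  refine ⟨?_, fun y hy => (iterate_fixed hy n).symm.trans (h y)⟩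
  calc f c = f (f^[n] c) := by rw [h]
    _ = f^[n] (f c) := (iterate_succ_apply' f n c).symm.trans (iterate_succ_apply f n c)
    _ = c := h _

namespace BooleanNetwork

variable {n : ℕ} {f : (Fin n → Bool) → Fin n → Bool}

lemma apply_update_of_not_influ {a i : Fin n} (h : ¬ influ f a i) (x : Fin n → Bool) (b : Bool) :
    f (update x a b) i = f x i := by
  simp only [influ, ne_eq, not_exists, not_not] at h
  conv_rhs => rw [← update_eq_self a x]
  cases b <;> cases x a <;> simp [h x]

lemma apply_eq_of_forall_influ {i : Fin n} {x y : Fin n → Bool}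
    (hxy : ∀ j, influ f j i → x j = y j) : f x i = f y i := by
  suffices key : ∀ (s : Finset (Fin n)) (x : Fin n → Bool), (∀ j ∉ s, x j = y j) →
      (∀ j, influ f j i → x j = y j) → f x i = f y i from
    key univ x (fun j hj => absurd (mem_univ j) hj) hxy
  intro s
  induction s using Finset.induction_on with
  | empty => exact fun x hx _ => congrArg (f · i) (funext fun j => hx j (notMem_empty j))
  | @insert a s _ ih =>
    intro x hx hinf
    have hfix_a : f x i = f (update x a (y a)) i := by
      by_cases ha : influ f a i
      · rw [← hinf a ha, update_eq_self]
      · exact (apply_update_of_not_influ ha x (y a)).symm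
    rw [hfix_a]
    apply ih
    · intro j hj
      by_cases hja : j = a
      · subst hja; simp
      · simpa [hja] using hx j (by simp [hja, hj])
    · intro j hj
      by_cases hja : j = a
      · subst hja; simp
      · simpa [hja] using hinf j hj

def IsAcyclic (f : (Fin n → Bool) → Fin n → Bool) : Prop :=
  ∀ i, ¬ TransGen (influ f) i i

open scoped Classical in
noncomputable def ancestors (f : (Fin n → Bool) → Fin n → Bool) (i : Fin n) :
    Finset (Fin n) :=
  univ.filter (fun j => TransGen (influ f) j i)

lemma mem_ancestors {i j : Fin n} : j ∈ ancestors f i ↔ TransGen (influ f) j i := by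
  simp [ancestors]

lemma ancestors_ssubset_of_influ (hacyc : IsAcyclic f) {i j : Fin n}
    (hji : influ f j i) : ancestors f j ⊂ ancestors f i := by
  refine Finset.ssubset_iff_subset_ne.mpr ⟨fun k hk => ?_, fun heq => ?_⟩
  · exact mem_ancestors.mpr ((mem_ancestors.mp hk).tail hji)
  · exact hacyc j (mem_ancestors.mp (heq ▸ mem_ancestors.mpr (TransGen.single hji)))

lemma card_ancestors_lt (hacyc : IsAcyclic f) (i : Fin n) : #(ancestors f i) < n := by
  have hssub : ancestors f i ⊂ univ :=
    (ssubset_iff_of_subset (subset_univ _)).mpr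
      ⟨i, mem_univ i, fun hi => hacyc i (mem_ancestors.mp hi)⟩
  simpa using card_lt_card hssub

lemma iterate_apply_eq_of_card_ancestors_lt (hacyc : IsAcyclic f) {k : ℕ} {i : Fin n}
    (hk : #(ancestors f i) < k) (x y : Fin n → Bool) : f^[k] x i = f^[k] y i := by
  induction k generalizing i with
  | zero => omega
  | succ k ih =>
    rw [iterate_succ_apply', iterate_succ_apply']
    refine apply_eq_of_forall_influ fun j hji => ih ?_
    have := card_lt_card (ancestors_ssubset_of_influ hacyc hji)
    omega

lemma iterate_eq_iterate (hacyc : IsAcyclic f) (x y : Fin n → Bool) :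
    f^[n] x = f^[n] y :=
  funext fun i => iterate_apply_eq_of_card_ancestors_lt hacyc (card_ancestors_lt hacyc i) x y

end BooleanNetwork

/-- If the interaction graph of `f` has no directed cycle (its transitive
closure is irreflexive), then `f` has a unique fixed point `x*`, reached from
every configuration after `n` parallel steps. -/
theorem stmt_5 {n : ℕ} (f : (Fin n → Bool) → Fin n → Bool)
    (hacyc : ∀ i : Fin n, ¬ Relation.TransGen (fun j i => influ f j i) i i) :
    ∃ xs : Fin n → Bool, f xs = xs ∧ (∀ y, f y = y → y = xs) ∧
      ∀ x : Fin n → Bool, f^[n] x = xs := by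
  have hconst (x : Fin n → Bool) : f^[n] x = f^[n] (fun _ => false) :=
    BooleanNetwork.iterate_eq_iterate hacyc x _
  obtain ⟨hfix, hunique⟩ := fixedPoint_of_iterate_eq_const hconst
  exact ⟨_, hfix, hunique, hconst⟩
end

section
/- Let f : B^n → B^n be a Boolean network whose interaction graph contains no positive cycle (a directed cycle with an even number of negative arcs, where the sign of arc (j,i) is determined by whether f_i is monotone increasing or decreasing in x_j). If f has two distinct fixed points, then the interaction graph contains a positive cycle; equivalently, if the signed interaction graph has no positive cycle, then f has at most one fixed point. -/
/-- `f_i` is nondecreasing in coordinate `j`. -/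
def monoInc {n : ℕ} (f : (Fin n → Bool) → Fin n → Bool) (j i : Fin n) : Prop :=
  ∀ x : Fin n → Bool,
    f (Function.update x j false) i ≤ f (Function.update x j true) i

/-- `f_i` is nonincreasing in coordinate `j`. -/
def monoDec {n : ℕ} (f : (Fin n → Bool) → Fin n → Bool) (j i : Fin n) : Prop :=
  ∀ x : Fin n → Bool,
    f (Function.update x j true) i ≤ f (Function.update x j false) i

open Function Finset

theorem Function.exists_isPeriodicPt {α : Type*} [Finite α] [Nonempty α] (g : α → α) :
    ∃ p n, 0 < n ∧ IsPeriodicPt g n p := by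
  obtain ⟨a⟩ := ‹Nonempty α›
  obtain ⟨s, t, hst, heq⟩ := Finite.exists_ne_map_eq_of_infinite fun t => g^[t] a
  wlog hlt : s < t generalizing s t
  · exact this t s hst.symm heq.symm (hst.lt_or_gt.resolve_left hlt)
  refine ⟨g^[s] a, t - s, Nat.sub_pos_of_lt hlt, ?_⟩
  rw [IsPeriodicPt, IsFixedPt, ← iterate_add_apply, Nat.sub_add_cancel hlt.le, heq]

theorem Function.exists_fin_cycle {α : Type*} [Finite α] [Nonempty α] (g : α → α) :
    ∃ (m : ℕ) (c : Fin (m + 1) → α), ∀ k, g (c (k + 1)) = c k := by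
  obtain ⟨p, n, hn, hp⟩ := exists_isPeriodicPt g
  obtain ⟨m, rfl⟩ := Nat.exists_eq_succ_of_ne_zero hn.ne'
  have forward (k : Fin (m + 1)) : g (g^[k.val] p) = g^[(k + 1 : Fin (m + 1)).val] p := by
    rw [Fin.val_add, Fin.val_one', Nat.add_mod_mod, hp.iterate_mod_apply, iterate_succ_apply']
  refine ⟨m, fun k => g^[(-k).val] p, fun k => ?_⟩
  rw [forward, neg_add, neg_add_cancel_right]

theorem Equiv.Perm.even_card_ne_apply {ι : Type*} [Fintype ι] (e : Equiv.Perm ι) (h : ι → Bool) :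
    Even #{k | h k ≠ h (e k)} := by
  have hpt : ∀ a b : Bool,
      (if a ≠ b then (1 : ZMod 2) else 0) = (if a then 1 else 0) + (if b then 1 else 0) := by
    decide
  rw [← ZMod.natCast_eq_zero_iff_even, Finset.card_filter, Nat.cast_sum]
  simp only [Nat.cast_ite, Nat.cast_one, Nat.cast_zero, hpt, Finset.sum_add_distrib]
  rw [Equiv.sum_comp e (fun k => if h k then (1 : ZMod 2) else 0), CharTwo.add_self_eq_zero]

theorem exists_update_apply_ne_of_apply_ne {ι γ : Type*} {β : ι → Type*} [Finite ι]
    [DecidableEq ι] (g : (∀ j, β j) → γ) {u v : ∀ j, β j} (h : g u ≠ g v) :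
    ∃ j w, u j ≠ v j ∧ w j = v j ∧ g w = g v ∧ g (update w j (u j)) ≠ g w := by
  have := Fintype.ofFinite ι
  suffices ∀ (s : Finset ι) (v : ∀ j, β j), (∀ j ∉ s, u j = v j) → g u ≠ g v →
      ∃ j w, u j ≠ v j ∧ w j = v j ∧ g w = g v ∧ g (update w j (u j)) ≠ g w from
    this univ v (by simp) h
  intro s
  induction s using Finset.induction_on with
  | empty => exact fun v hv h => absurd (congrArg g (funext fun j => hv j (notMem_empty j))) h
  | insert a s _ ih =>
    intro v hv h
    by_cases hstep : g (update v a (u a)) = g v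
    · have hagree : ∀ j ∉ s, u j = update v a (u a) j := by
        intro j hj
        by_cases hja : j = a
        · rw [hja, update_self]
        · rw [update_of_ne hja]; exact hv j (by simp [hja, hj])
      obtain ⟨j, w, hj, hw, hgw, hne⟩ := ih _ hagree (hstep ▸ h)
      have hja : j ≠ a := by rintro rfl; simp at hj
      rw [update_of_ne hja] at hj hw
      exact ⟨j, w, hj, hw, hgw.trans hstep, hne⟩
    · refine ⟨a, v, fun hva => hstep ?_, rfl, rfl, hstep⟩
      rw [hva, update_eq_self]

theorem update_true_ne_update_false {ι γ : Type*} [DecidableEq ι] {g : (ι → Bool) → γ}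
    {w : ι → Bool} {j : ι} {b : Bool} (h : g (update w j b) ≠ g w) :
    g (update w j true) ≠ g (update w j false) := by
  intro heq
  apply h
  conv_rhs => rw [← update_eq_self j w]
  generalize w j = a
  cases a <;> cases b <;> simp [heq]

section BooleanNetwork

variable {n : ℕ} {f : (Fin n → Bool) → Fin n → Bool} {j i : Fin n} {w : Fin n → Bool}

theorem monoInc.apply_update_eq (hinc : monoInc f j i)
    (h : f (update w j true) i ≠ f (update w j false) i) (a : Bool) :
    f (update w j a) i = a := by
  obtain ⟨hfalse, htrue⟩ := Bool.lt_iff.mp (lt_of_le_of_ne (hinc w) h.symm)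
  cases a
  exacts [hfalse, htrue]

theorem monoDec.apply_update_eq (hdec : monoDec f j i)
    (h : f (update w j true) i ≠ f (update w j false) i) (a : Bool) :
    f (update w j a) i = !a := by
  obtain ⟨htrue, hfalse⟩ := Bool.lt_iff.mp (lt_of_le_of_ne (hdec w) h)
  cases a
  exacts [hfalse, htrue]

theorem exists_signed_arc_of_fixedPoints {σ : Fin n → Fin n → Bool}
    (hsign : ∀ j i : Fin n, influ f j i →
      (σ j i = true → monoInc f j i) ∧ (σ j i = false → monoDec f j i))
    {x y : Fin n → Bool} (hx : f x = x) (hy : f y = y) (hi : x i ≠ y i) :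
    ∃ j, x j ≠ y j ∧ influ f j i ∧ (σ j i = false ↔ y j ≠ y i) := by
  have hfi : f x i ≠ f y i := by rwa [hx, hy]
  obtain ⟨j, w, hj, hwj, hgw, hne⟩ := exists_update_apply_ne_of_apply_ne (f · i) hfi
  have hflip := update_true_ne_update_false (g := (f · i)) hne
  have hinf : influ f j i := ⟨w, hflip⟩
  have hwi : f (update w j (w j)) i = y i := by rw [update_eq_self, hgw, hy]
  refine ⟨j, hj, hinf, ?_⟩
  cases hσ : σ j i
  · rw [((hsign j i hinf).2 hσ).apply_update_eq hflip, hwj] at hwi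
    simp [← hwi]
  · rw [((hsign j i hinf).1 hσ).apply_update_eq hflip, hwj] at hwi
    simp [hwi]

end BooleanNetwork

/-- If the signed interaction graph of `f` has no positive cycle (a directed
cycle with an even number of negative arcs), then `f` has at most one fixed
point. -/
theorem stmt_6 {n : ℕ} (f : (Fin n → Bool) → Fin n → Bool)
    (σ : Fin n → Fin n → Bool)
    (hsign : ∀ j i : Fin n, influ f j i →
      (σ j i = true → monoInc f j i) ∧ (σ j i = false → monoDec f j i))
    (hnopos : ¬ ∃ (m : ℕ) (c : Fin (m + 1) → Fin n),
      (∀ k : Fin (m + 1), influ f (c k) (c (k + 1))) ∧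
      Even ((Finset.univ.filter
        (fun k : Fin (m + 1) => σ (c k) (c (k + 1)) = false)).card)) :
    ∀ x y : Fin n → Bool, f x = x → f y = y → x = y := by
  intro x y hx hy
  by_contra hne
  obtain ⟨i₀, hi₀⟩ := ne_iff.mp hne
  have : Nonempty {i // x i ≠ y i} := ⟨⟨i₀, hi₀⟩⟩
  choose pred hpred_ne hpred_arc hpred_sign using
    fun i : {i // x i ≠ y i} => exists_signed_arc_of_fixedPoints hsign hx hy i.2
  obtain ⟨m, c, hc⟩ := exists_fin_cycle fun i => (⟨pred i, hpred_ne i⟩ : {i // x i ≠ y i})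
  have hval (k : Fin (m + 1)) : pred (c (k + 1)) = c k := congrArg Subtype.val (hc k)
  refine hnopos ⟨m, fun k => c k, fun k => ?_, ?_⟩
  · show influ f (c k) (c (k + 1))
    rw [← hval k]
    exact hpred_arc _
  · have hneg (k : Fin (m + 1)) : σ (c k) (c (k + 1)) = false ↔ y (c k) ≠ y (c (k + 1)) := by
      rw [← hval k]
      exact hpred_sign _
    convert (Equiv.addRight 1).even_card_ne_apply fun k => y (c k) using 3
    exact hneg _
end

section
/- Let f : B^n → B^n be a Boolean network and δ_1, δ_2 two block-sequential update schedules viewed as functions δ : {1,…,n} → ℕ giving each node its block index. If for every pair (i,j) such that j influences i (f_i depends on x_j) we have δ_1(j) < δ_1(i) ⟺ δ_2(j) < δ_2(i), then F[δ_1] = F[δ_2]. -/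
/-!
Unfolding the schedule, the value of node `i` after a block-sequential step is
`f_i` evaluated at the state in which the nodes of earlier blocks already carry
their new values and all other nodes their old ones. Since `f_i` only sees the
nodes that influence it, and the two schedules agree on which of those come
earlier, strong induction on the block index of `i` shows both schedules produce
the same value at `i`.
-/

def upd {n : ℕ} (f : (Fin n → Bool) → Fin n → Bool)
    (B : Finset (Fin n)) (x : Fin n → Bool) : Fin n → Bool :=
  fun i => if i ∈ B then f x i else x i

def run {n : ℕ} (f : (Fin n → Bool) → Fin n → Bool)
    (δ : List (Finset (Fin n))) (x : Fin n → Bool) : Fin n → Bool :=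
  δ.foldl (fun y B => upd f B y) x

/-- Global transition function of the block-sequential schedule given by
the block-index function `δ : Fin n → ℕ`: blocks `δ⁻¹(k)` are updated in
increasing order of `k`. -/
def bsRun {n : ℕ} (f : (Fin n → Bool) → Fin n → Bool) (δ : Fin n → ℕ) :
    (Fin n → Bool) → Fin n → Bool :=
  run f ((List.range (Finset.univ.sup δ + 1)).map
    (fun k => Finset.univ.filter (fun i => δ i = k)))

section Influence

variable {n : ℕ} (f : (Fin n → Bool) → Fin n → Bool)

theorem apply_update_of_not_influ {i j : Fin n} (hj : ¬influ f j i)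
    (x : Fin n → Bool) (b : Bool) : f (Function.update x j b) i = f x i := by
  simp only [influ, not_exists, not_not] at hj
  have h_const : ∀ b', f (Function.update x j b') i = f (Function.update x j true) i := by
    intro b'
    cases b' <;> simp [hj x]
  rw [h_const, ← h_const (x j), Function.update_eq_self]

theorem apply_eq_of_forall_influ_eq {i : Fin n} {x y : Fin n → Bool}
    (h : ∀ j, influ f j i → x j = y j) : f x i = f y i := by
  classical
  suffices ∀ s : Finset (Fin n), ∀ x : Fin n → Bool, (∀ j ∉ s, x j = y j) →
      (∀ j, influ f j i → x j = y j) → f x i = f y i from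
    this Finset.univ x (by simp) h
  intro s
  induction s using Finset.induction_on with
  | empty =>
    intro x hxy _
    rw [funext fun j => hxy j (Finset.notMem_empty j)]
  | insert a s _ ih =>
    intro x hxy hinflu
    have h_fix_a : f x i = f (Function.update x a (y a)) i := by
      by_cases ha : influ f a i
      · rw [← hinflu a ha, Function.update_eq_self]
      · exact (apply_update_of_not_influ f ha x (y a)).symm
    rw [h_fix_a]
    refine ih _ (fun j hj => ?_) (fun j hj => ?_)
    · by_cases hja : j = a
      · simp [hja]
      · simpa [hja] using hxy j (by simp [hja, hj])
    · by_cases hja : j = a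
      · simp [hja]
      · simpa [hja] using hinflu j hj

end Influence

section BlockSequential

variable {n : ℕ} (f : (Fin n → Bool) → Fin n → Bool) (δ : Fin n → ℕ)

def blocks (k : ℕ) : List (Finset (Fin n)) :=
  (List.range k).map (fun t => Finset.univ.filter (fun i => δ i = t))

theorem run_blocks_succ (k : ℕ) (x : Fin n → Bool) :
    run f (blocks δ (k + 1)) x =
      upd f (Finset.univ.filter (fun i => δ i = k)) (run f (blocks δ k) x) := by
  simp [run, blocks, List.range_succ]

theorem run_blocks_apply (k : ℕ) (x : Fin n → Bool) (j : Fin n) :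
    run f (blocks δ k) x j =
      if δ j < k then f (run f (blocks δ (δ j)) x) j else x j := by
  induction k with
  | zero => simp [blocks, run]
  | succ k ih =>
    rw [run_blocks_succ]
    by_cases hjk : δ j = k
    · simp [upd, hjk]
    · simp only [upd, Finset.mem_filter, Finset.mem_univ, true_and, hjk, if_false, ih]
      congr 1
      grind

theorem bsRun_apply_eq_run_blocks (x : Fin n → Bool) (j : Fin n) :
    bsRun f δ x j = f (run f (blocks δ (δ j)) x) j := by
  have hj : δ j < Finset.univ.sup δ + 1 :=
    Nat.lt_succ_of_le (Finset.le_sup (Finset.mem_univ j))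
  change run f (blocks δ (Finset.univ.sup δ + 1)) x j = _
  rw [run_blocks_apply, if_pos hj]

theorem bsRun_apply (x : Fin n → Bool) (i : Fin n) :
    bsRun f δ x i = f (fun j => if δ j < δ i then bsRun f δ x j else x j) i := by
  rw [bsRun_apply_eq_run_blocks]
  congr 1
  funext j
  rw [run_blocks_apply, bsRun_apply_eq_run_blocks]

end BlockSequential

/-- Aracena et al.: two block-sequential schedules with the same update graph
labels on the arcs of the interaction graph yield the same global transition
function. -/
theorem stmt_7 {n : ℕ} (f : (Fin n → Bool) → Fin n → Bool)
    (δ₁ δ₂ : Fin n → ℕ)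
    (h : ∀ i j : Fin n, influ f j i → (δ₁ j < δ₁ i ↔ δ₂ j < δ₂ i)) :
    bsRun f δ₁ = bsRun f δ₂ := by
  funext x i
  induction hm : δ₁ i using Nat.strong_induction_on generalizing i with
  | _ m ih =>
    rw [bsRun_apply f δ₁, bsRun_apply f δ₂]
    refine apply_eq_of_forall_influ_eq f fun j hj => ?_
    by_cases h₁ : δ₁ j < δ₁ i
    · rw [if_pos h₁, if_pos ((h i j hj).mp h₁)]
      exact ih _ (hm ▸ h₁) j rfl
    · rw [if_neg h₁, if_neg (mt (h i j hj).mpr h₁)]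
end

section
/- The periodic update schedule ({0,1},{1,2},{0,1,2},{0,1,2},{0,1},{1,2}) on node set {0,1,2} is fair but is neither the rewriting of any block-parallel schedule nor a block-sequential schedule (since node 1 appears in more than one block and the blocks do not form a partition). -/
def bpW {n m : ℕ} (S : Fin m → List (Fin n)) (t : ℕ) : Finset (Fin n) :=
  Finset.univ.filter (fun v => ∃ i : Fin m, (S i)[t % (S i).length]? = some v)

def bpL {n m : ℕ} (S : Fin m → List (Fin n)) : ℕ :=
  Finset.univ.lcm (fun i => (S i).length)

/-!
Three nodes split into disjoint sequences only with lengths {3}, {2,1} or {1,1,1}, whose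
least common multiples are 3, 2 and 1; so no block-parallel schedule on three nodes has
period 6. Concretely, period 6 needs a sequence of length divisible by 3, which then
contains every node and leaves no room for the sequence of even length that 2 ∣ 6 also
requires.
-/

theorem Nat.Prime.exists_mem_dvd_of_dvd_finset_lcm {ι : Type*} {p : ℕ} (hp : p.Prime)
    {s : Finset ι} {f : ι → ℕ} (h : p ∣ s.lcm f) : ∃ i ∈ s, p ∣ f i :=
  hp.prime.exists_mem_finset_dvd (h.trans (Finset.lcm_dvd_prod s f))

theorem List.Nodup.mem_of_length_eq_card {α : Type*} [Fintype α] {l : List α}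
    (hl : l.Nodup) (hlen : l.length = Fintype.card α) (a : α) : a ∈ l := by
  classical
  have huniv : l.toFinset = Finset.univ :=
    Finset.eq_univ_of_card _ (by rw [List.toFinset_card_of_nodup hl, hlen])
  exact List.mem_toFinset.mp (huniv ▸ Finset.mem_univ a)

theorem eq_of_length_eq_card_of_disjoint {α ι : Type*} [Fintype α] {S : ι → List α}
    (hne : ∀ i, S i ≠ []) (hnd : ∀ i, (S i).Nodup)
    (hdisj : ∀ i j, i ≠ j → ∀ v, v ∈ S i → v ∉ S j)
    {i : ι} (hi : (S i).length = Fintype.card α) (j : ι) : j = i := by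
  by_contra hji
  obtain ⟨v, hv⟩ := List.exists_mem_of_ne_nil (S j) (hne j)
  exact hdisj j i hji v hv ((hnd i).mem_of_length_eq_card hi v)

/-- The periodic schedule ({0,1},{1,2},{0,1,2},{0,1,2},{0,1},{1,2}) on three
nodes is fair, but it is neither block-sequential (its blocks do not form a
partition: node 1 appears several times) nor the rewriting of any
block-parallel schedule. -/
theorem stmt_12 :
    let Ws : Fin 6 → Finset (Fin 3) :=
      ![{0, 1}, {1, 2}, {0, 1, 2}, {0, 1, 2}, {0, 1}, {1, 2}]
    (∀ v : Fin 3, ∃ t : Fin 6, v ∈ Ws t) ∧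
    ¬ (∀ v : Fin 3, (Finset.univ.filter (fun t : Fin 6 => v ∈ Ws t)).card = 1) ∧
    ¬ ∃ (m : ℕ) (S : Fin m → List (Fin 3)),
        (∀ i, S i ≠ []) ∧ (∀ i, (S i).Nodup) ∧
        (∀ i j, i ≠ j → ∀ v, v ∈ S i → v ∉ S j) ∧
        (∀ v : Fin 3, ∃ i, v ∈ S i) ∧
        bpL S = 6 ∧ (∀ t : Fin 6, bpW S t = Ws t) := by
  refine ⟨by decide, by decide, ?_⟩
  rintro ⟨m, S, hne, hnd, hdisj, -, hlcm, -⟩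
  obtain ⟨i, -, hi3⟩ := Nat.prime_three.exists_mem_dvd_of_dvd_finset_lcm
    (show 3 ∣ bpL S by rw [hlcm]; decide)
  obtain ⟨j, -, hj2⟩ := Nat.prime_two.exists_mem_dvd_of_dvd_finset_lcm
    (show 2 ∣ bpL S by rw [hlcm]; decide)
  have hlen : (S i).length = Fintype.card (Fin 3) := by
    have hle := (hnd i).length_le_card
    have hpos := List.length_pos_iff.mpr (hne i)
    simp only [Fintype.card_fin] at hle ⊢
    omega
  rw [eq_of_length_eq_card_of_disjoint hne hnd hdisj hlen j, hlen] at hj2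
  exact absurd hj2 (by decide)
end
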